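/- arXiv:math-ph/0512002 — 5 statements merged into one kernel-verified Lean document; each statement's English description precedes it below -/
import Mathlib

section
/- For all y ∈ [0, π], 0 ≤ y - sin y ≤ (π³/6) · sin²(y/2). -/
lemma sub_sin_le_cube {y : ℝ} (hy : 0 ≤ y) : y - Real.sin y ≤ y ^ 3 / 6 := by
  have hmono : Monotone (fun x : ℝ => x ^ 3 / 6 - x + Real.sin x) := by
    apply monotone_of_deriv_nonneg
    · fun_prop
    · intro x
      have hD : HasDerivAt (fun x : ℝ => x ^ 3 / 6 - x + Real.sin x)
          (x ^ 2 / 2 - 1 + Real.cos x) x := by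
        have := (((hasDerivAt_pow 3 x).div_const 6).sub (hasDerivAt_id x)).add
          (Real.hasDerivAt_sin x)
        convert this using 1 <;> try rfl
        simp; ring
      rw [hD.deriv]
      have := Real.one_sub_sq_div_two_le_cos (x := x)
      linarith
  have h := hmono hy
  simp at h
  linarith

theorem stmt1 (y : ℝ) (hy : y ∈ Set.Icc 0 Real.pi) :
    0 ≤ y - Real.sin y ∧
    y - Real.sin y ≤ (Real.pi ^ 3 / 6) * (Real.sin (y / 2)) ^ 2 := by
  obtain ⟨h0, h1⟩ := hy
  have hsle : Real.sin y ≤ y := Real.sin_le h0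
  refine ⟨by linarith, ?_⟩
  have h2 : 2 / Real.pi * (y / 2) ≤ Real.sin (y / 2) :=
    Real.mul_le_sin (by linarith) (by linarith)
  have hpi : 0 < Real.pi := Real.pi_pos
  have hylepi : y ≤ Real.pi * Real.sin (y / 2) := by
    rw [div_mul_eq_mul_div, div_le_iff₀ hpi] at h2
    nlinarith
  have hs0 : 0 ≤ Real.sin (y / 2) := by nlinarith
  have hc := sub_sin_le_cube h0
  have hsq : y ^ 2 ≤ (Real.pi * Real.sin (y / 2)) ^ 2 := by
    nlinarith
  have h3 : y ^ 3 ≤ Real.pi ^ 3 * Real.sin (y / 2) ^ 2 := by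
    nlinarith [mul_le_mul_of_nonneg_left hsq (le_of_lt hpi),
      mul_le_mul_of_nonneg_right h1 (sq_nonneg y)]
  linarith
end

section
/- Fix g₀, u₀ > 0, γ, and let u(·; μ) solve u u_g + μ u + sin g - γ = 0 with u(g₀) = u₀, on an interval to the right of g₀ where u > 0. If 0 ≤ μ₁ < μ₂ then u(g; μ₁) > u(g; μ₂) for all g > g₀ in the intersection of their domains. -/
theorem stmt12 (g₀ u₀ γ G₁ G₂ : ℝ) (hu₀ : 0 < u₀)
    (μ₁ μ₂ : ℝ) (hμ₁ : 0 ≤ μ₁) (hμ : μ₁ < μ₂)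
    (u₁ u₂ u₁' u₂' : ℝ → ℝ)
    (h₁ : ∀ g ∈ Set.Ico g₀ G₁, HasDerivAt u₁ (u₁' g) g ∧
      u₁ g * u₁' g + μ₁ * u₁ g + Real.sin g - γ = 0 ∧ 0 < u₁ g)
    (h₂ : ∀ g ∈ Set.Ico g₀ G₂, HasDerivAt u₂ (u₂' g) g ∧
      u₂ g * u₂' g + μ₂ * u₂ g + Real.sin g - γ = 0 ∧ 0 < u₂ g)
    (hi₁ : u₁ g₀ = u₀) (hi₂ : u₂ g₀ = u₀) :
    ∀ g : ℝ, g₀ < g → g < G₁ → g < G₂ → u₂ g < u₁ g := by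
  intro g hg hG₁ hG₂
  set v : ℝ → ℝ := fun x => u₁ x ^ 2 - u₂ x ^ 2 with hv
  have mem₁ : ∀ x ∈ Set.Icc g₀ g, x ∈ Set.Ico g₀ G₁ :=
    fun x hx => ⟨hx.1, lt_of_le_of_lt hx.2 hG₁⟩
  have mem₂ : ∀ x ∈ Set.Icc g₀ g, x ∈ Set.Ico g₀ G₂ :=
    fun x hx => ⟨hx.1, lt_of_le_of_lt hx.2 hG₂⟩
  have pos₁ : ∀ x ∈ Set.Icc g₀ g, 0 < u₁ x := fun x hx => (h₁ x (mem₁ x hx)).2.2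
  have pos₂ : ∀ x ∈ Set.Icc g₀ g, 0 < u₂ x := fun x hx => (h₂ x (mem₂ x hx)).2.2
  have key : ∀ x ∈ Set.Icc g₀ g, HasDerivAt v (2 * (μ₂ * u₂ x - μ₁ * u₁ x)) x := by
    intro x hx
    obtain ⟨hd1, he1, hp1⟩ := h₁ x (mem₁ x hx)
    obtain ⟨hd2, he2, hp2⟩ := h₂ x (mem₂ x hx)
    have hD : HasDerivAt v (2 * u₁ x ^ 1 * u₁' x - 2 * u₂ x ^ 1 * u₂' x) x := by
      have h : HasDerivAt (fun y => u₁ y ^ 2 - u₂ y ^ 2)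
          ((2:ℕ) * u₁ x ^ (2 - 1) * u₁' x - (2:ℕ) * u₂ x ^ (2 - 1) * u₂' x) x :=
        (hd1.pow 2).sub (hd2.pow 2)
      convert h using 1
      norm_num
    convert hD using 1
    simp only [pow_one]
    linear_combination 2 * he2 - 2 * he1
  have hg₀ : g₀ ∈ Set.Icc g₀ g := ⟨le_refl _, hg.le⟩
  have hgmem : g ∈ Set.Icc g₀ g := ⟨hg.le, le_refl _⟩
  have hv0 : v g₀ = 0 := by simp [hv, hi₁, hi₂]
  -- the derivative of v is positive wherever v vanishes
  have dpos : ∀ x ∈ Set.Icc g₀ g, v x = 0 → 0 < 2 * (μ₂ * u₂ x - μ₁ * u₁ x) := by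
    intro x hx hvx
    have h1 := pos₁ x hx
    have h2 := pos₂ x hx
    have hvx' : u₁ x ^ 2 - u₂ x ^ 2 = 0 := hvx
    have heq : u₁ x = u₂ x := by nlinarith
    rw [heq]
    nlinarith
  -- slope of v is eventually positive near a zero of v
  have slope_pos : ∀ c ∈ Set.Icc g₀ g, v c = 0 →
      ∀ᶠ x in nhdsWithin c {c}ᶜ, 0 < (v x - v c) / (x - c) := by
    intro c hc hvc
    have hd := key c hc
    have ht := hasDerivAt_iff_tendsto_slope.mp hd
    have hp := dpos c hc hvc
    have := ht.eventually (eventually_gt_nhds hp)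
    filter_upwards [this] with x hx
    simpa [slope_def_field, div_eq_inv_mul] using hx
  -- positivity just to the right of g₀
  have hEv : ∀ᶠ x in nhdsWithin g₀ (Set.Ioi g₀), 0 < v x := by
    have h1 := (slope_pos g₀ hg₀ hv0).filter_mono
      (nhdsWithin_mono g₀ (fun x hx => ne_of_gt (Set.mem_Ioi.mp hx)))
    filter_upwards [h1, self_mem_nhdsWithin] with x hx hx2
    have hxg : (0:ℝ) < x - g₀ := sub_pos.mpr hx2
    have := mul_pos hx hxg
    rw [div_mul_cancel₀ _ (ne_of_gt hxg)] at this
    linarith [hv0 ▸ this]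
  obtain ⟨d, hd0, hdsub⟩ := mem_nhdsGT_iff_exists_Ioo_subset.mp hEv
  have hd0' : g₀ < d := hd0
  -- positivity on (g₀, d)
  have hIoo : ∀ x, g₀ < x → x < d → 0 < v x := fun x h1 h2 => hdsub ⟨h1, h2⟩
  -- main claim: v g > 0
  by_contra hcon
  push_neg at hcon
  have hvg : v g ≤ 0 := by
    have h1 := pos₁ g hgmem
    have h2 := pos₂ g hgmem
    simp only [hv]
    nlinarith
  have hdg : d ≤ g := by
    by_contra hdg
    push_neg at hdg
    exact absurd (hIoo g hg hdg) (not_lt.mpr hvg)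
  -- the set where v ≤ 0, away from g₀
  set S : Set ℝ := Set.Icc d g ∩ v ⁻¹' Set.Iic 0 with hS
  have hgS : g ∈ S := ⟨⟨hdg, le_refl _⟩, hvg⟩
  have hcontOn : ContinuousOn v (Set.Icc d g) := fun x hx =>
    ((key x ⟨le_trans hd0'.le hx.1, hx.2⟩).continuousAt).continuousWithinAt
  have hSclosed : IsClosed S :=
    hcontOn.preimage_isClosed_of_isClosed isClosed_Icc isClosed_Iic
  have hScompact : IsCompact S :=
    isCompact_Icc.of_isClosed_subset hSclosed Set.inter_subset_left
  have hcS : sInf S ∈ S := hScompact.sInf_mem ⟨g, hgS⟩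
  set c := sInf S with hc
  have hcIcc : c ∈ Set.Icc g₀ g := ⟨le_trans hd0'.le hcS.1.1, hcS.1.2⟩
  have hg₀c : g₀ < c := lt_of_lt_of_le hd0' hcS.1.1
  -- v is positive on (g₀, c)
  have hleft : ∀ x, g₀ < x → x < c → 0 < v x := by
    intro x h1 h2
    by_cases hxd : x < d
    · exact hIoo x h1 hxd
    · by_contra hvx
      push_neg at hvx
      have hxS : x ∈ S := ⟨⟨not_lt.mp hxd, le_trans h2.le hcS.1.2⟩, hvx⟩
      exact absurd (csInf_le hScompact.bddBelow hxS) (not_le.mpr h2)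
  -- v c = 0
  have hvc : v c = 0 := by
    refine le_antisymm hcS.2 ?_
    have hcont : ContinuousAt v c := (key c hcIcc).continuousAt
    have htend : Filter.Tendsto v (nhdsWithin c (Set.Iio c)) (nhds (v c)) :=
      hcont.continuousWithinAt.tendsto
    refine ge_of_tendsto htend ?_
    filter_upwards [Ioo_mem_nhdsLT_of_mem (Set.mem_Ioc.mpr ⟨hg₀c, le_refl c⟩)] with x hx
    exact (hleft x hx.1 hx.2).le
  -- contradiction from the slope at c
  have hsp := (slope_pos c hcIcc hvc).filter_mono
    (nhdsWithin_mono c (fun x hx => ne_of_lt (Set.mem_Iio.mp hx)))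
  have hmem := Ioo_mem_nhdsLT_of_mem (Set.mem_Ioc.mpr ⟨hg₀c, le_refl c⟩)
  obtain ⟨x, hx1, hx2⟩ := (hsp.and (Filter.eventually_mem_set.mpr hmem)).exists
  have hxc : x - c < 0 := sub_neg.mpr hx2.2
  have hvxneg : v x < 0 := by
    rcases div_pos_iff.mp (by simpa [hvc] using hx1) with ⟨_, h⟩ | ⟨h, _⟩
    · linarith
    · linarith
  exact absurd (hleft x hx2.1 hx2.2) (not_lt.mpr hvxneg.le)
end

section
/- Fix g₀, u₀ > 0, μ ≥ 0, and let u(·; γ) solve u u_g + μ u + sin g - γ = 0 with u(g₀) = u₀ > 0. If γ₁ > γ₂ then u(g; γ₁) > u(g; γ₂) for all g > g₀ in the common domain where both are positive. -/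
/-!
Work with the kinetic energies `u ^ 2`: along a solution, `(u ^ 2)' = 2 (γ - μ u - sin g)`,
so `w = u₁ ^ 2 - u₂ ^ 2` satisfies `w' = 2 (γ₁ - γ₂) - 2 μ (u₁ - u₂)` and `w (g₀) = 0`.
Wherever `w ≤ 0` we have `u₁ ≤ u₂` (both are positive), hence `w' ≥ 2 (γ₁ - γ₂) > 0`.
A function that is increasing at each point where it is nonpositive cannot return to `0` or
below after starting at `0`: at a minimum point in `(g₀, g]` its left slope would be `≤ 0`.
-/

open Set Filter Topology

theorem IsMinOn.hasDerivWithinAt_Iic_nonpos {f : ℝ → ℝ} {f' a d : ℝ} (had : a < d)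
    (hmin : IsMinOn f (Icc a d) d) (hf : HasDerivWithinAt f f' (Iic d) d) : f' ≤ 0 := by
  have hslope : Tendsto (slope f d) (𝓝[<] d) (𝓝 f') :=
    (hasDerivWithinAt_iff_tendsto_slope' self_notMem_Iio).mp hf.Iio_of_Iic
  refine le_of_tendsto hslope ?_
  filter_upwards [Ioo_mem_nhdsLT had] with y hy
  rw [slope_def_field]
  exact div_nonpos_of_nonneg_of_nonpos (sub_nonneg.mpr (hmin ⟨hy.1.le, hy.2.le⟩))
    (sub_nonpos.mpr hy.2.le)

theorem pos_of_deriv_pos_of_nonpos {f f' : ℝ → ℝ} {a b : ℝ} (ha : 0 ≤ f a)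
    (hf : ContinuousOn f (Icc a b)) (hf' : ∀ x ∈ Ioc a b, HasDerivWithinAt f (f' x) (Iic x) x)
    (hpos : ∀ x ∈ Ioc a b, f x ≤ 0 → 0 < f' x) : ∀ x ∈ Ioc a b, 0 < f x := by
  intro x hx
  by_contra! hfx
  obtain ⟨c, hc, hcmin⟩ := isCompact_Icc.exists_isMinOn (nonempty_Icc.mpr hx.1.le)
    (hf.mono (Icc_subset_Icc_right hx.2))
  -- if the minimum is attained at `a`, then `f a = 0 = f x` and `x` is a minimum point too
  obtain ⟨d, hd, hdmin⟩ : ∃ d ∈ Ioc a x, IsMinOn f (Icc a x) d := by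
    rcases hc.1.eq_or_lt with rfl | hac
    · exact ⟨x, ⟨hx.1, le_rfl⟩, fun y hy => (hcmin hy).trans' (ha.trans' hfx)⟩
    · exact ⟨c, ⟨hac, hc.2⟩, hcmin⟩
  have hdx : Ioc a x ⊆ Ioc a b := Ioc_subset_Ioc_right hx.2
  have hfd : f d ≤ 0 := (hdmin ⟨hx.1.le, le_rfl⟩).trans hfx
  have hderiv : f' d ≤ 0 :=
    (hdmin.on_subset (Icc_subset_Icc_right hd.2)).hasDerivWithinAt_Iic_nonpos hd.1 (hf' d (hdx hd))
  exact (hpos d (hdx hd) hfd).not_ge hderiv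

theorem hasDerivAt_sq_of_ode {u u' : ℝ → ℝ} {μ γ g : ℝ} (hu : HasDerivAt u (u' g) g)
    (hode : u g * u' g + μ * u g + Real.sin g - γ = 0) :
    HasDerivAt (fun t => u t ^ 2) (2 * (γ - μ * u g - Real.sin g)) g := by
  have hsq : HasDerivAt (fun t => u t ^ 2) (2 * u g * u' g) g := by simpa using hu.fun_pow 2
  convert hsq using 1
  linear_combination (-2 : ℝ) * hode

theorem stmt13_general (g₀ u₀ μ G₁ G₂ : ℝ) (hμ : 0 ≤ μ)
    (γ₁ γ₂ : ℝ) (hγ : γ₂ < γ₁)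
    (u₁ u₂ u₁' u₂' : ℝ → ℝ)
    (h₁ : ∀ g ∈ Set.Ico g₀ G₁, HasDerivAt u₁ (u₁' g) g ∧
      u₁ g * u₁' g + μ * u₁ g + Real.sin g - γ₁ = 0 ∧ 0 < u₁ g)
    (h₂ : ∀ g ∈ Set.Ico g₀ G₂, HasDerivAt u₂ (u₂' g) g ∧
      u₂ g * u₂' g + μ * u₂ g + Real.sin g - γ₂ = 0 ∧ 0 < u₂ g)
    (hi₁ : u₁ g₀ = u₀) (hi₂ : u₂ g₀ = u₀) :
    ∀ g : ℝ, g₀ < g → g < G₁ → g < G₂ → u₂ g < u₁ g := by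
  intro g hg hG₁ hG₂
  have hmem : ∀ t ∈ Icc g₀ g, t ∈ Ico g₀ G₁ ∧ t ∈ Ico g₀ G₂ := fun t ht =>
    ⟨⟨ht.1, ht.2.trans_lt hG₁⟩, ⟨ht.1, ht.2.trans_lt hG₂⟩⟩
  have hderiv : ∀ t ∈ Icc g₀ g, HasDerivAt (fun s => u₁ s ^ 2 - u₂ s ^ 2)
      (2 * (γ₁ - μ * u₁ t - Real.sin t) - 2 * (γ₂ - μ * u₂ t - Real.sin t)) t := fun t ht =>
    (hasDerivAt_sq_of_ode (h₁ t (hmem t ht).1).1 (h₁ t (hmem t ht).1).2.1).sub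
      (hasDerivAt_sq_of_ode (h₂ t (hmem t ht).2).1 (h₂ t (hmem t ht).2).2.1)
  have hpos : ∀ t ∈ Ioc g₀ g, u₁ t ^ 2 - u₂ t ^ 2 ≤ 0 →
      0 < 2 * (γ₁ - μ * u₁ t - Real.sin t) - 2 * (γ₂ - μ * u₂ t - Real.sin t) := by
    intro t ht hw
    obtain ⟨-, -, hu₁⟩ := h₁ t (hmem t (Ioc_subset_Icc_self ht)).1
    obtain ⟨-, -, hu₂⟩ := h₂ t (hmem t (Ioc_subset_Icc_self ht)).2
    have hle : u₁ t ≤ u₂ t := (pow_le_pow_iff_left₀ hu₁.le hu₂.le two_ne_zero).mp (by linarith)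
    nlinarith [mul_le_mul_of_nonneg_left hle hμ]
  have hw : 0 < u₁ g ^ 2 - u₂ g ^ 2 :=
    pos_of_deriv_pos_of_nonpos (by simp [hi₁, hi₂])
      (fun t ht => (hderiv t ht).continuousAt.continuousWithinAt)
      (fun t ht => (hderiv t (Ioc_subset_Icc_self ht)).hasDerivWithinAt) hpos g ⟨hg, le_rfl⟩
  exact lt_of_pow_lt_pow_left₀ 2 (h₁ g (hmem g ⟨hg.le, le_rfl⟩).1).2.2.le (by linarith)

theorem stmt13 (g₀ u₀ μ G₁ G₂ : ℝ) (hu₀ : 0 < u₀) (hμ : 0 ≤ μ)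
    (γ₁ γ₂ : ℝ) (hγ : γ₂ < γ₁)
    (u₁ u₂ u₁' u₂' : ℝ → ℝ)
    (h₁ : ∀ g ∈ Set.Ico g₀ G₁, HasDerivAt u₁ (u₁' g) g ∧
      u₁ g * u₁' g + μ * u₁ g + Real.sin g - γ₁ = 0 ∧ 0 < u₁ g)
    (h₂ : ∀ g ∈ Set.Ico g₀ G₂, HasDerivAt u₂ (u₂' g) g ∧
      u₂ g * u₂' g + μ * u₂ g + Real.sin g - γ₂ = 0 ∧ 0 < u₂ g)
    (hi₁ : u₁ g₀ = u₀) (hi₂ : u₂ g₀ = u₀) :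
    ∀ g : ℝ, g₀ < g → g < G₁ → g < G₂ → u₂ g < u₁ g :=
  stmt13_general g₀ u₀ μ G₁ G₂ hμ γ₁ γ₂ hγ u₁ u₂ u₁' u₂' h₁ h₂ hi₁ hi₂
end

section
/- Let μ > 0 and let z, ž be two solutions of z_g + μ√(2z) + sin g - γ = 0 on [g₀, ∞) with z, ž bounded and positive, and w := z - ž never zero. Then |w(g)| ≤ |w(g₀)| exp(-C(g - g₀)) for all g ≥ g₀, where C = μ / √(2(ž^M + |w(g₀)|)) and ž^M = sup ž. -/
theorem aux15 (g₀ μ M : ℝ) (hμ : 0 < μ) (Z C : ℝ → ℝ)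
    (hd : ∀ g ∈ Set.Ici g₀, HasDerivAt (fun t => Z t - C t)
      (μ * Real.sqrt (2 * C g) - μ * Real.sqrt (2 * Z g)) g)
    (hCpos : ∀ g ∈ Set.Ici g₀, 0 < C g)
    (hCM : ∀ g ∈ Set.Ici g₀, C g ≤ M)
    (hlt : ∀ g ∈ Set.Ici g₀, C g < Z g) :
    ∀ g ∈ Set.Ici g₀, Z g - C g ≤ (Z g₀ - C g₀) *
      Real.exp (-(μ / Real.sqrt (2 * (M + (Z g₀ - C g₀)))) * (g - g₀)) := by
  set u : ℝ → ℝ := fun t => Z t - C t with hu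
  have hg₀ : g₀ ∈ Set.Ici g₀ := Set.self_mem_Ici
  have hu0 : 0 < u g₀ := sub_pos.2 (hlt g₀ hg₀)
  set B : ℝ := M + (Z g₀ - C g₀) with hB
  have hMpos : 0 < M := lt_of_lt_of_le (hCpos g₀ hg₀) (hCM g₀ hg₀)
  have hBpos : 0 < B := by
    have : 0 < Z g₀ - C g₀ := hu0
    rw [hB]; linarith
  set K : ℝ := μ / Real.sqrt (2 * B) with hK
  have hsB : 0 < Real.sqrt (2 * B) := Real.sqrt_pos.2 (by linarith)
  have hKpos : 0 < K := div_pos hμ hsB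
  have hcont : ContinuousOn u (Set.Ici g₀) := fun g hg =>
    (hd g hg).continuousAt.continuousWithinAt
  -- u is antitone on [g₀, ∞)
  have hanti : AntitoneOn u (Set.Ici g₀) := by
    apply antitoneOn_of_deriv_nonpos (convex_Ici g₀) hcont
    · intro g hg
      rw [interior_Ici] at hg
      exact (hd g (le_of_lt (Set.mem_Ioi.1 hg))).differentiableAt.differentiableWithinAt
    · intro g hg
      rw [interior_Ici] at hg
      rw [(hd g (le_of_lt (Set.mem_Ioi.1 hg))).deriv]
      have h1 : Real.sqrt (2 * C g) ≤ Real.sqrt (2 * Z g) :=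
        Real.sqrt_le_sqrt (by linarith [hlt g (le_of_lt (Set.mem_Ioi.1 hg))])
      nlinarith
  -- consequent bounds
  have hZB : ∀ g ∈ Set.Ici g₀, Z g ≤ B := by
    intro g hg
    have h1 : u g ≤ u g₀ := hanti hg₀ hg hg
    have h2 : C g ≤ M := hCM g hg
    have h3 : u g = Z g - C g := rfl
    have h4 : u g₀ = Z g₀ - C g₀ := rfl
    rw [hB]; linarith [h1, h2]
  have hCB : ∀ g ∈ Set.Ici g₀, C g ≤ B := by
    intro g hg
    have : (0:ℝ) < Z g₀ - C g₀ := hu0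
    have := hCM g hg
    rw [hB]; linarith
  -- key differential inequality
  have hKey : ∀ g ∈ Set.Ici g₀,
      μ * Real.sqrt (2 * C g) - μ * Real.sqrt (2 * Z g) ≤ -(K * u g) := by
    intro g hg
    have hCp := hCpos g hg
    have hZp : 0 < Z g := lt_trans hCp (hlt g hg)
    have hZs : Real.sqrt (2 * Z g) ≤ Real.sqrt (2 * B) :=
      Real.sqrt_le_sqrt (by linarith [hZB g hg])
    have hCs : Real.sqrt (2 * C g) ≤ Real.sqrt (2 * B) :=
      Real.sqrt_le_sqrt (by linarith [hCB g hg])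
    have hCZ : Real.sqrt (2 * C g) ≤ Real.sqrt (2 * Z g) :=
      Real.sqrt_le_sqrt (by linarith [hlt g hg])
    have hsq1 : Real.sqrt (2 * Z g) ^ 2 = 2 * Z g := Real.sq_sqrt (by linarith)
    have hsq2 : Real.sqrt (2 * C g) ^ 2 = 2 * C g := Real.sq_sqrt (by linarith)
    have hnn : 0 ≤ Real.sqrt (2 * C g) := Real.sqrt_nonneg _
    have key : Z g - C g ≤ Real.sqrt (2 * B) *
        (Real.sqrt (2 * Z g) - Real.sqrt (2 * C g)) := by
      nlinarith [hCZ, hZs, hCs, hnn]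
    have h2 : K * u g ≤ μ * (Real.sqrt (2 * Z g) - Real.sqrt (2 * C g)) := by
      rw [hK, div_mul_eq_mul_div, div_le_iff₀ hsB]
      have hug : u g = Z g - C g := rfl
      nlinarith [mul_le_mul_of_nonneg_left key hμ.le]
    linarith
  -- the function u * exp(K(t-g₀)) is antitone
  have hh : ∀ g ∈ Set.Ici g₀, HasDerivAt (fun t => u t * Real.exp (K * (t - g₀)))
      ((μ * Real.sqrt (2 * C g) - μ * Real.sqrt (2 * Z g)) * Real.exp (K * (g - g₀))
        + u g * (Real.exp (K * (g - g₀)) * K)) g := by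
    intro g hg
    have h1 : HasDerivAt (fun t => K * (t - g₀)) K g := by
      simpa using ((hasDerivAt_id g).sub_const g₀).const_mul K
    exact (hd g hg).mul h1.exp
  have hanti2 : AntitoneOn (fun t => u t * Real.exp (K * (t - g₀))) (Set.Ici g₀) := by
    apply antitoneOn_of_deriv_nonpos (convex_Ici g₀)
    · exact fun g hg => (hh g hg).continuousAt.continuousWithinAt
    · intro g hg
      rw [interior_Ici] at hg
      exact (hh g (le_of_lt (Set.mem_Ioi.1 hg))).differentiableAt.differentiableWithinAt
    · intro g hg
      rw [interior_Ici] at hg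
      rw [(hh g (le_of_lt (Set.mem_Ioi.1 hg))).deriv]
      have hE : 0 < Real.exp (K * (g - g₀)) := Real.exp_pos _
      have := hKey g (le_of_lt (Set.mem_Ioi.1 hg))
      nlinarith [mul_le_mul_of_nonneg_right this hE.le]
  intro g hg
  have h3 : u g * Real.exp (K * (g - g₀)) ≤ u g₀ := by
    have := hanti2 hg₀ hg hg
    simpa using this
  have hE : 0 < Real.exp (K * (g - g₀)) := Real.exp_pos _
  have h4 : u g ≤ u g₀ * Real.exp (-(K * (g - g₀))) := by
    rw [Real.exp_neg, ← div_eq_mul_inv, le_div_iff₀ hE]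
    exact h3
  have h5 : -K * (g - g₀) = -(K * (g - g₀)) := by ring
  show u g ≤ u g₀ * Real.exp (-K * (g - g₀))
  rw [h5]
  exact h4

theorem stmt15 (g₀ μ γ zM zM' : ℝ) (hμ : 0 < μ) (z zc : ℝ → ℝ)
    (hz : ∀ g ∈ Set.Ici g₀,
      HasDerivAt z (γ - Real.sin g - μ * Real.sqrt (2 * z g)) g ∧ 0 < z g)
    (hzc : ∀ g ∈ Set.Ici g₀,
      HasDerivAt zc (γ - Real.sin g - μ * Real.sqrt (2 * zc g)) g ∧ 0 < zc g)
    (hbz : ∀ g ∈ Set.Ici g₀, z g ≤ zM')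
    (hbd : ∀ g ∈ Set.Ici g₀, zc g ≤ zM)
    (hw : ∀ g ∈ Set.Ici g₀, z g ≠ zc g) :
    ∀ g ∈ Set.Ici g₀,
      |z g - zc g| ≤ |z g₀ - zc g₀| *
        Real.exp (-(μ / Real.sqrt (2 * (zM + |z g₀ - zc g₀|))) * (g - g₀)) := by
  have hg₀ : g₀ ∈ Set.Ici g₀ := Set.self_mem_Ici
  have hcont : ContinuousOn (fun t => z t - zc t) (Set.Ici g₀) := fun g hg =>
    (((hz g hg).1.sub (hzc g hg).1)).continuousAt.continuousWithinAt
  rcases lt_or_gt_of_ne (sub_ne_zero.2 (hw g₀ hg₀)) with hneg | hpos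
  · -- z g₀ < zc g₀ : z < zc everywhere
    have hlt : ∀ g ∈ Set.Ici g₀, z g < zc g := by
      intro g hg
      by_contra hcon
      push_neg at hcon
      have hne := hw g hg
      have hgt : 0 < z g - zc g := sub_pos.2 (lt_of_le_of_ne hcon (Ne.symm hne))
      have hsub : Set.Icc g₀ g ⊆ Set.Ici g₀ := fun x hx => hx.1
      have hiv := intermediate_value_Icc (hg : g₀ ≤ g) (hcont.mono hsub)
      have h0 : (0:ℝ) ∈ Set.Icc (z g₀ - zc g₀) (z g - zc g) :=
        ⟨le_of_lt hneg, le_of_lt hgt⟩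
      obtain ⟨c, hc, hc0⟩ := hiv h0
      exact hw c (hsub hc) (sub_eq_zero.1 hc0)
    have hd : ∀ g ∈ Set.Ici g₀, HasDerivAt (fun t => zc t - z t)
        (μ * Real.sqrt (2 * z g) - μ * Real.sqrt (2 * zc g)) g := by
      intro g hg
      have h := (hzc g hg).1.sub (hz g hg).1
      refine h.congr_deriv ?_
      ring
    have hzM : ∀ g ∈ Set.Ici g₀, z g ≤ zM := fun g hg =>
      le_trans (le_of_lt (hlt g hg)) (hbd g hg)
    have hres := aux15 g₀ μ zM hμ zc z hd (fun g hg => (hz g hg).2) hzM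
      (fun g hg => hlt g hg)
    intro g hg
    have h1 : |z g - zc g| = zc g - z g := by
      rw [abs_sub_comm, abs_of_pos (sub_pos.2 (hlt g hg))]
    have h2 : |z g₀ - zc g₀| = zc g₀ - z g₀ := by
      rw [abs_sub_comm, abs_of_pos (sub_pos.2 (hlt g₀ hg₀))]
    rw [h1, h2]
    exact hres g hg
  · -- zc g₀ < z g₀ : zc < z everywhere
    have hlt : ∀ g ∈ Set.Ici g₀, zc g < z g := by
      intro g hg
      by_contra hcon
      push_neg at hcon
      have hne := hw g hg
      have hgt : z g - zc g < 0 := sub_neg.2 (lt_of_le_of_ne hcon hne)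
      have hsub : Set.Icc g₀ g ⊆ Set.Ici g₀ := fun x hx => hx.1
      have hiv := intermediate_value_Icc' (hg : g₀ ≤ g) (hcont.mono hsub)
      have h0 : (0:ℝ) ∈ Set.Icc (z g - zc g) (z g₀ - zc g₀) :=
        ⟨le_of_lt hgt, le_of_lt hpos⟩
      obtain ⟨c, hc, hc0⟩ := hiv h0
      exact hw c (hsub hc) (sub_eq_zero.1 hc0)
    have hd : ∀ g ∈ Set.Ici g₀, HasDerivAt (fun t => z t - zc t)
        (μ * Real.sqrt (2 * zc g) - μ * Real.sqrt (2 * z g)) g := by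
      intro g hg
      have h := (hz g hg).1.sub (hzc g hg).1
      refine h.congr_deriv ?_
      ring
    have hres := aux15 g₀ μ zM hμ z zc hd (fun g hg => (hzc g hg).2) hbd
      (fun g hg => hlt g hg)
    intro g hg
    have h1 : |z g - zc g| = z g - zc g := abs_of_pos (sub_pos.2 (hlt g hg))
    have h2 : |z g₀ - zc g₀| = z g₀ - zc g₀ := abs_of_pos (sub_pos.2 (hlt g₀ hg₀))
    rw [h1, h2]
    exact hres g hg
end

section
/- The first Picard approximation of the soliton kinetic energy, z₁(y) := √(1-γ²)·2sin²(y/2) + γ[π(cos(y/2) - 1) + y - sin y], is nonnegative on [0, 2π] whenever 0 ≤ γ ≤ (1 + (7π/4)²)^{-1/2}, and the corresponding viscosity approximation is μ₁ = πγ/4, i.e., 2πγ / ∫₀^{2π} √(2·2sin²(y/2)) dy = πγ/4. -/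
open Real Set

private lemma key19 (t : ℝ) (ht0 : 0 ≤ t) (htp : t ≤ π) :
    π * (1 - Real.cos t) ≤ 7 * π / 2 * Real.sin t ^ 2 + (2 * t - Real.sin (2 * t)) := by
  have hpi := Real.pi_gt_d6
  by_cases hc : -5/7 ≤ Real.cos t
  · -- easy case
    have hs : Real.sin t ^ 2 = (1 - Real.cos t) * (1 + Real.cos t) := by
      have := Real.sin_sq_add_cos_sq t
      nlinarith
    have h2 : Real.sin (2 * t) ≤ 2 * t := Real.sin_le (by linarith)
    have hc1 : Real.cos t ≤ 1 := Real.cos_le_one t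
    have h7 : 0 ≤ (1 - Real.cos t) * (1 + Real.cos t - 2/7) :=
      mul_nonneg (by linarith) (by linarith)
    nlinarith [mul_nonneg Real.pi_pos.le h7]
  · push_neg at hc
    set g : ℝ → ℝ := fun s => 2 * s - Real.sin (2 * s) - π * (1 - Real.cos s) with hg
    have hderiv : ∀ s, HasDerivAt g (2 - Real.cos (2 * s) * 2 - π * Real.sin s) s := by
      intro s
      have h1 : HasDerivAt (fun s : ℝ => 2 * s) 2 s := by
        simpa using (hasDerivAt_id s).const_mul 2
      have h2 : HasDerivAt (fun s : ℝ => Real.sin (2 * s)) (Real.cos (2 * s) * 2) s := by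
        have := (Real.hasDerivAt_sin (2 * s)).comp s ((hasDerivAt_id s).const_mul 2)
        simpa [Function.comp_def] using this
      have h3 : HasDerivAt (fun s : ℝ => π * (1 - Real.cos s)) (π * Real.sin s) s := by
        have := ((hasDerivAt_const s (1:ℝ)).sub (Real.hasDerivAt_cos s)).const_mul π
        simpa using this
      exact (h1.sub h2).sub h3
    have hanti : AntitoneOn g (Icc t π) := by
      apply antitoneOn_of_deriv_nonpos (convex_Icc t π)
      · exact fun s _ => (hderiv s).continuousAt.continuousWithinAt
      · exact fun s _ => (hderiv s).differentiableAt.differentiableWithinAt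
      · intro s hs
        rw [interior_Icc] at hs
        rw [(hderiv s).deriv]
        have hs0 : 0 ≤ Real.sin s := Real.sin_nonneg_of_nonneg_of_le_pi (by linarith [hs.1]) hs.2.le
        have hcs : Real.cos s ≤ Real.cos t :=
          Real.cos_le_cos_of_nonneg_of_le_pi ht0 hs.2.le hs.1.le
        have hss : Real.sin s ^ 2 ≤ 24 / 49 := by
          have := Real.sin_sq_add_cos_sq s
          nlinarith
        have h4s : 4 * Real.sin s ≤ π := by nlinarith
        have hcos2 : Real.cos (2 * s) = Real.cos s ^ 2 - Real.sin s ^ 2 := Real.cos_two_mul' s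
        have hpyth := Real.sin_sq_add_cos_sq s
        nlinarith
    have hgt : 0 ≤ g t := by
      have := hanti (left_mem_Icc.mpr htp) (right_mem_Icc.mpr htp) htp
      have hgpi : g π = 0 := by
        simp only [hg]
        rw [Real.sin_two_pi, Real.cos_pi]
        ring
      linarith [this, hgpi ▸ this]
    have hsq : 0 ≤ Real.sin t ^ 2 := sq_nonneg _
    have : 0 ≤ 2 * t - Real.sin (2 * t) - π * (1 - Real.cos t) := hgt
    nlinarith

theorem stmt19 (γ : ℝ) (h0 : 0 ≤ γ)
    (h1 : γ ≤ 1 / Real.sqrt (1 + (7 * Real.pi / 4) ^ 2)) :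
    (∀ y ∈ Set.Icc (0:ℝ) (2 * Real.pi),
      0 ≤ Real.sqrt (1 - γ ^ 2) * 2 * Real.sin (y / 2) ^ 2 +
          γ * (Real.pi * (Real.cos (y / 2) - 1) + y - Real.sin y)) ∧
    2 * Real.pi * γ /
      (∫ y in (0:ℝ)..(2 * Real.pi), Real.sqrt (2 * (2 * Real.sin (y / 2) ^ 2))) =
      Real.pi * γ / 4 := by
  have hpi := Real.pi_gt_d6
  constructor
  · intro y hy
    obtain ⟨hy0, hy2⟩ := hy
    set t := y / 2 with htdef
    have ht0 : 0 ≤ t := by positivity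
    have htp : t ≤ π := by simp only [htdef]; linarith
    -- sqrt(1-γ²) ≥ (7π/4) γ
    have hk : 7 * π / 4 * γ ≤ Real.sqrt (1 - γ ^ 2) := by
      have hden : (0:ℝ) < Real.sqrt (1 + (7 * π / 4) ^ 2) := Real.sqrt_pos.mpr (by positivity)
      have hγsq : γ ^ 2 * (1 + (7 * π / 4) ^ 2) ≤ 1 := by
        rw [le_div_iff₀ hden] at h1
        nlinarith [mul_nonneg h0 hden.le, Real.sq_sqrt (show (0:ℝ) ≤ 1 + (7 * π / 4) ^ 2 by positivity)]
      rw [Real.le_sqrt (by positivity)]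
      all_goals nlinarith [sq_nonneg (γ * (7 * π / 4))]
    have hkey := key19 t ht0 htp
    have hy2t : y = 2 * t := by simp [htdef]; ring
    have hsy : Real.sin y = Real.sin (2 * t) := by rw [hy2t]
    have hcy : Real.cos t = Real.cos (y / 2) := rfl
    -- γ * (π(cos t - 1) + 2t - sin 2t) ≥ -γ * (7π/2) sin²t
    have hstep : γ * (π * (Real.cos t - 1) + y - Real.sin y) ≥ -(γ * (7 * π / 2 * Real.sin t ^ 2)) := by
      rw [hsy, hy2t]
      nlinarith [mul_le_mul_of_nonneg_left hkey h0]
    have hmain : Real.sqrt (1 - γ ^ 2) * 2 * Real.sin t ^ 2 ≥ γ * (7 * π / 2 * Real.sin t ^ 2) := by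
      nlinarith [sq_nonneg (Real.sin t)]
    linarith [hstep, hmain]
  · have hint : (∫ y in (0:ℝ)..(2 * Real.pi), Real.sqrt (2 * (2 * Real.sin (y / 2) ^ 2))) = 8 := by
      have hcongr : ∀ y ∈ Set.uIcc (0:ℝ) (2 * π),
          Real.sqrt (2 * (2 * Real.sin (y / 2) ^ 2)) = 2 * Real.sin (y / 2) := by
        intro y hy
        rw [Set.uIcc_of_le (by positivity)] at hy
        have hs : 0 ≤ Real.sin (y / 2) :=
          Real.sin_nonneg_of_nonneg_of_le_pi (by linarith [hy.1]) (by linarith [hy.2])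
        rw [show 2 * (2 * Real.sin (y / 2) ^ 2) = (2 * Real.sin (y / 2)) ^ 2 by ring,
          Real.sqrt_sq (by linarith)]
      rw [intervalIntegral.integral_congr hcongr]
      rw [intervalIntegral.integral_const_mul]
      rw [intervalIntegral.integral_comp_div (fun x => Real.sin x) two_ne_zero]
      simp [Real.cos_pi]
      ring
    rw [hint]
    ring
end
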